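/- Let n ≥ 1 and let ι : ℝ^n \ {0} → ℝ^n \ {0} be the inversion ι(x) = x/|x|². Then for every set F ⊆ ℝ^n \ {0}: dim_A(ι(F)) = dim_A(F). -/

import Mathlib

open Set Metric
open scoped ENNReal

noncomputable section

/-- Covering number: the smallest number of sets of diameter at most `r` needed to
cover `F` (`∞` if no finite such cover exists). -/
def coverN {X : Type*} [PseudoMetricSpace X] (F : Set X) (r : ℝ) : ℝ≥0∞ :=
  sInf {m : ℝ≥0∞ | ∃ 𝒰 : Finset (Set X), (𝒰.card : ℝ≥0∞) = m ∧
    (∀ U ∈ 𝒰, EMetric.diam U ≤ ENNReal.ofReal r) ∧ F ⊆ ⋃ U ∈ 𝒰, U}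

/-- Regularized Assouad spectrum `dim_{A,reg}^θ(F)`. -/
def dimAreg {X : Type*} [PseudoMetricSpace X] (θ : ℝ) (F : Set X) : ℝ :=
  sInf {α : ℝ | 0 < α ∧ ∃ C : ℝ, 0 < C ∧ ∀ x ∈ F, ∀ r R : ℝ,
    0 < r → r ≤ R ^ (1/θ) → R ^ (1/θ) < R → R < 1 →
    coverN (closedBall x R ∩ F) r ≤ ENNReal.ofReal (C * (R/r) ^ α)}

/-- (Unregularized) Assouad spectrum `dim_A^θ(F)`. -/
def dimAspec {X : Type*} [PseudoMetricSpace X] (θ : ℝ) (F : Set X) : ℝ :=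
  sInf {α : ℝ | 0 < α ∧ ∃ C : ℝ, 0 < C ∧ ∀ x ∈ F, ∀ R : ℝ, 0 < R → R < 1 →
    coverN (closedBall x R ∩ F) (R ^ (1/θ)) ≤ ENNReal.ofReal (C * (R / R ^ (1/θ)) ^ α)}

/-- Upper box-counting dimension of a (bounded) set. -/
def dimBupper {X : Type*} [PseudoMetricSpace X] (F : Set X) : ℝ :=
  sInf {α : ℝ | 0 < α ∧ ∃ C : ℝ, 0 < C ∧ ∀ r : ℝ, 0 < r → r ≤ diam F →
    coverN F r ≤ ENNReal.ofReal (C * r ^ (-α))}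

/-- Assouad dimension. -/
def dimA {X : Type*} [PseudoMetricSpace X] (F : Set X) : ℝ :=
  sInf {α : ℝ | 0 < α ∧ ∃ C : ℝ, 0 < C ∧ ∀ x ∈ F, ∀ r R : ℝ, 0 < r → r ≤ R →
    coverN (closedBall x R ∩ F) r ≤ ENNReal.ofReal (C * (R/r) ^ α)}

/-- Quasi-Assouad dimension: `sup_{0<θ<1} dim_{A,reg}^θ(F)`. -/
def dimqA {X : Type*} [PseudoMetricSpace X] (F : Set X) : ℝ :=
  sSup ((fun θ => dimAreg θ F) '' Ioo (0:ℝ) 1)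

open Classical in
/-- Phase-transition parameter `ρ(F)`. -/
def rhoPT {X : Type*} [PseudoMetricSpace X] (F : Set X) : ℝ :=
  if ∃ θ ∈ Ioo (0:ℝ) 1, dimAreg θ F = dimqA F
  then sInf {θ | θ ∈ Ioo (0:ℝ) 1 ∧ dimAreg θ F = dimqA F}
  else 1

/-- The axes-parallel cube `Q(x,R) = ∏ [xᵢ - R, xᵢ + R]`. -/
def cubeQ {n : ℕ} (x : EuclideanSpace ℝ (Fin n)) (R : ℝ) : Set (EuclideanSpace ℝ (Fin n)) :=
  {y | ∀ i, x i - R ≤ y i ∧ y i ≤ x i + R}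

/-- The generation-`m` dyadic subcube of `Q(x,R)` with index `k`. -/
def dyadicCube {n : ℕ} (x : EuclideanSpace ℝ (Fin n)) (R : ℝ) (m : ℕ)
    (k : Fin n → Fin (2 ^ m)) : Set (EuclideanSpace ℝ (Fin n)) :=
  {y | ∀ i, x i - R + (k i : ℝ) * (2 * R / 2 ^ m) ≤ y i ∧
        y i ≤ x i - R + ((k i : ℝ) + 1) * (2 * R / 2 ^ m)}

/-- `N_d(B(x,R) ∩ F, m)`: the number of generation-`m` dyadic subcubes of `Q(x,R)`
that intersect `B(x,R) ∩ F`. -/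
def Nd {n : ℕ} (x : EuclideanSpace ℝ (Fin n)) (R : ℝ)
    (F : Set (EuclideanSpace ℝ (Fin n))) (m : ℕ) : ℕ :=
  Nat.card {k : Fin n → Fin (2 ^ m) // (dyadicCube x R m k ∩ (closedBall x R ∩ F)).Nonempty}

/-- `f` is `η`-quasisymmetric on the set `S`. -/
def QSOn {X Y : Type*} [PseudoMetricSpace X] [PseudoMetricSpace Y]
    (η : ℝ → ℝ) (f : X → Y) (S : Set X) : Prop :=
  ∀ x ∈ S, ∀ y ∈ S, ∀ z ∈ S, x ≠ z →
    dist (f x) (f y) ≤ η (dist x y / dist x z) * dist (f x) (f z)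

/-- Distance between two sets. -/
def setDist {X : Type*} [PseudoMetricSpace X] (A B : Set X) : ℝ :=
  sInf {d : ℝ | ∃ a ∈ A, ∃ b ∈ B, d = dist a b}

end

/-!
The inversion `ι x = x / ‖x‖²` is an involution with `‖ι x‖ = ‖x‖⁻¹` and
`dist (ι x) (ι y) = dist x y / (‖x‖ * ‖y‖)`, so it is `m⁻²`-Lipschitz on `{m ≤ ‖y‖}`, and it
suffices to transfer a bound `N(B(x, R) ∩ F, r) ≤ C (R / r) ^ α` from `F` to `ι F`.
A ball `B(ι x, R)` with `R ≤ ‖ι x‖ / 2` stays away from the origin: it is the image of a piece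
of `B(x, 2 ‖x‖² R) ∩ F` on which `ι` is Lipschitz with constant `(3 / (2 ‖x‖))²`.
A larger ball lies in `B(0, ρ)`, `ρ = 3R`, which we cut into the dyadic annuli
`ρ 2⁻ᵏ⁻¹ < ‖y‖ ≤ ρ 2⁻ᵏ` down to scale `r` and a central ball of diameter at most `r`.
The preimage of the `k`-th annulus is an annulus of size `≈ 2ᵏ / ρ` far from the origin,
so it costs `C (4 ρ / (2ᵏ r)) ^ α`; these costs sum geometrically to `O((R / r) ^ α)`.
Applying the transfer to `F` and to `ι F` gives equality.
-/

open EuclideanGeometry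

section Covering

variable {X Y : Type*} [PseudoMetricSpace X] [PseudoMetricSpace Y] {A B : Set X} {r : ℝ}

lemma coverN_le_card (𝒰 : Finset (Set X)) (hd : ∀ U ∈ 𝒰, ediam U ≤ ENNReal.ofReal r)
    (hA : A ⊆ ⋃ U ∈ 𝒰, U) : coverN A r ≤ 𝒰.card :=
  sInf_le ⟨𝒰, rfl, hd, hA⟩

lemma coverN_empty : coverN (∅ : Set X) r = 0 :=
  nonpos_iff_eq_zero.1 <| by
    simpa using coverN_le_card (A := (∅ : Set X)) (r := r) ∅ (by simp) (by simp)

lemma coverN_mono (h : A ⊆ B) : coverN A r ≤ coverN B r :=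
  sInf_le_sInf fun _ ⟨𝒰, h𝒰, hd, hB⟩ => ⟨𝒰, h𝒰, hd, h.trans hB⟩

lemma coverN_le_one (h : ediam A ≤ ENNReal.ofReal r) : coverN A r ≤ 1 := by
  simpa using coverN_le_card {A} (by simpa using h) (by simp)

lemma coverN_union_le : coverN (A ∪ B) r ≤ coverN A r + coverN B r := by
  classical
  simp only [coverN, ENNReal.sInf_add, ENNReal.add_sInf]
  refine le_iInf₂ fun _ ⟨𝒱, h𝒱, hdV, hBV⟩ => le_iInf₂ fun _ ⟨𝒰, h𝒰, hdU, hAU⟩ => ?_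
  subst h𝒰 h𝒱
  refine (coverN_le_card (𝒰 ∪ 𝒱) ?_ ?_).trans (mod_cast Finset.card_union_le 𝒰 𝒱)
  · intro U hU
    rcases Finset.mem_union.1 hU with hU | hU
    exacts [hdU U hU, hdV U hU]
  · rw [Finset.set_biUnion_union]
    exact union_subset_union hAU hBV

lemma coverN_biUnion_le {ι : Type*} (s : Finset ι) (A : ι → Set X) :
    coverN (⋃ i ∈ s, A i) r ≤ ∑ i ∈ s, coverN (A i) r := by
  classical
  induction s using Finset.induction_on with
  | empty => simp [coverN_empty]
  | insert a s has ih =>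
    rw [Finset.sum_insert has, Finset.set_biUnion_insert]
    exact coverN_union_le.trans (add_le_add_right ih _)

lemma coverN_image_le {f : X → Y} {K : NNReal} {S : Set X} (hf : LipschitzOnWith K f S)
    (hr : 0 ≤ r) : coverN (f '' S) (K * r) ≤ coverN S r := by
  classical
  refine le_sInf fun _ ⟨𝒰, h𝒰, hd, hS⟩ => ?_
  subst h𝒰
  refine (coverN_le_card (𝒰.image fun U => f '' (U ∩ S)) ?_ ?_).trans
    (mod_cast Finset.card_image_le)
  · simp only [Finset.mem_image, forall_exists_index, and_imp, forall_apply_eq_imp_iff₂]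
    intro U hU
    refine ediam_le_of_forall_dist_le ?_
    rintro _ ⟨a, ⟨haU, haS⟩, rfl⟩ _ ⟨b, ⟨hbU, hbS⟩, rfl⟩
    have hab : dist a b ≤ r := by
      have := (edist_le_ediam_of_mem haU hbU).trans (hd U hU)
      rwa [edist_dist, ENNReal.ofReal_le_ofReal_iff hr] at this
    exact (hf.dist_le_mul a haS b hbS).trans (by gcongr)
  · rintro _ ⟨a, haS, rfl⟩
    obtain ⟨U, hU, haU⟩ := mem_iUnion₂.1 (hS haS)
    exact mem_biUnion (Finset.mem_image_of_mem _ hU) (mem_image_of_mem f ⟨haU, haS⟩)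

end Covering

section Inversion

variable {E : Type*} [NormedAddCommGroup E] [InnerProductSpace ℝ E] {x y : E}

lemma inversion_zero_one_eq : inversion (0 : E) 1 = fun x => (‖x‖ ^ 2)⁻¹ • x := by
  ext x
  simp [inversion_def]

lemma norm_inversion_zero_one (x : E) : ‖inversion 0 1 x‖ = ‖x‖⁻¹ := by
  simpa using dist_inversion_center (0 : E) x 1

lemma dist_inversion_zero_one (hx : x ≠ 0) (hy : y ≠ 0) :
    dist (inversion 0 1 x) (inversion 0 1 y) = dist x y / (‖x‖ * ‖y‖) := by
  rw [dist_inversion_inversion hx hy, dist_zero_right, dist_zero_right, one_pow, one_div,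
    inv_mul_eq_div]

lemma lipschitzOnWith_inversion_zero_one {m : ℝ} (hm : 0 < m) :
    LipschitzOnWith (m ^ 2)⁻¹.toNNReal (inversion (0 : E) 1) {y | m ≤ ‖y‖} := by
  refine LipschitzOnWith.of_dist_le_mul fun a (ha : m ≤ ‖a‖) b (hb : m ≤ ‖b‖) => ?_
  have ha0 : a ≠ 0 := norm_pos_iff.1 (hm.trans_le ha)
  have hb0 : b ≠ 0 := norm_pos_iff.1 (hm.trans_le hb)
  rw [dist_inversion_zero_one ha0 hb0, Real.coe_toNNReal _ (by positivity), sq,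
    inv_mul_eq_div]
  gcongr

lemma image_inversion_zero_one_image (F : Set E) :
    inversion 0 1 '' (inversion 0 1 '' F) = F := by
  rw [image_image]
  simp [inversion_inversion (0 : E) one_ne_zero]

lemma le_norm_of_norm_inversion_le {a : ℝ} (hy : y ≠ 0) (h : ‖inversion 0 1 y‖ ≤ a) :
    a⁻¹ ≤ ‖y‖ := by
  rw [norm_inversion_zero_one] at h
  exact inv_le_of_inv_le₀ (norm_pos_iff.2 hy) h

lemma norm_le_of_le_norm_inversion {a : ℝ} (ha : 0 < a) (h : a ≤ ‖inversion (0 : E) 1 y‖) :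
    ‖y‖ ≤ a⁻¹ := by
  rw [norm_inversion_zero_one] at h
  exact le_inv_of_le_inv₀ ha h

end Inversion

lemma sum_rpow_div_two_pow_le {α x : ℝ} (hα : 0 < α) (hx : 0 ≤ x) (K : ℕ) :
    ∑ k ∈ Finset.range K, (x / 2 ^ k) ^ α ≤ x ^ α / (1 - 2⁻¹ ^ α) := by
  have hs0 : 0 < (2⁻¹ : ℝ) ^ α := by positivity
  have hs1 : (2⁻¹ : ℝ) ^ α < 1 := Real.rpow_lt_one (by norm_num) (by norm_num) hα
  have hterm : ∀ k : ℕ, (x / 2 ^ k) ^ α = x ^ α * ((2⁻¹ : ℝ) ^ α) ^ k := fun k => by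
    rw [div_eq_mul_inv, ← inv_pow, Real.mul_rpow hx (by positivity),
      Real.rpow_pow_comm (by norm_num)]
  simp only [hterm, ← Finset.mul_sum, Finset.range_eq_Ico]
  rw [div_eq_mul_one_div]
  gcongr
  simpa using geom_sum_Ico_le_of_lt_one hs0.le hs1 (m := 0) (n := K)

lemma Ioc_div_two_pow_subset_biUnion (c : ℝ) (K : ℕ) :
    Ioc (c / 2 ^ (K + 1)) c ⊆ ⋃ k ∈ Finset.range (K + 1), Ioc (c / 2 ^ k / 2) (c / 2 ^ k) := by
  induction K with
  | zero => simp
  | succ K ih =>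
    intro u ⟨hlo, hhi⟩
    rw [Finset.range_add_one, Finset.set_biUnion_insert]
    by_cases hu : u ≤ c / 2 ^ (K + 1)
    · exact Or.inl ⟨by rwa [div_div, ← pow_succ], hu⟩
    · exact Or.inr (ih ⟨not_le.1 hu, hhi⟩)

section Assouad

variable {X : Type*} [PseudoMetricSpace X]

def AssouadBound (F : Set X) (α C : ℝ) : Prop :=
  ∀ x ∈ F, ∀ r R : ℝ, 0 < r → r ≤ R →
    coverN (closedBall x R ∩ F) r ≤ ENNReal.ofReal (C * (R / r) ^ α)

def assouadExponents (F : Set X) : Set ℝ :=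
  {α | 0 < α ∧ ∃ C, 0 < C ∧ AssouadBound F α C}

lemma dimA_eq_sInf_assouadExponents (F : Set X) : dimA F = sInf (assouadExponents F) := rfl

end Assouad

section InversionAssouad

variable {E : Type*} [NormedAddCommGroup E] [InnerProductSpace ℝ E] {F : Set E} {x : E}
  {α C r R : ℝ}

lemma closedBall_inversion_inter_image_subset (hF : 0 ∉ F) (hx : x ≠ 0) (hR : R ≤ ‖x‖⁻¹ / 2) :
    closedBall (inversion 0 1 x) R ∩ inversion 0 1 '' F ⊆
      inversion 0 1 '' (closedBall x (2 * ‖x‖ ^ 2 * R) ∩ F ∩ {y | 2 * ‖x‖ / 3 ≤ ‖y‖}) := by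
  rintro _ ⟨hd, y, hyF, rfl⟩
  have hy : y ≠ 0 := ne_of_mem_of_not_mem hyF hF
  have ht : 0 < ‖x‖ := norm_pos_iff.2 hx
  have hd' : dist (inversion 0 1 y) (inversion 0 1 x) ≤ R := mem_closedBall.1 hd
  have hnx := norm_inversion_zero_one x
  have hy_lo : 2 * ‖x‖ / 3 ≤ ‖y‖ := by
    refine (inv_div 3 (2 * ‖x‖)) ▸ le_norm_of_norm_inversion_le hy ?_
    have := norm_le_norm_add_const_of_dist_le hd'
    rw [div_eq_mul_inv, mul_inv]
    linarith
  have hy_hi : ‖y‖ ≤ 2 * ‖x‖ := by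
    refine (inv_inv (2 * ‖x‖)) ▸ norm_le_of_le_norm_inversion (by positivity) ?_
    have := norm_le_norm_add_const_of_dist_le ((dist_comm _ _).trans_le hd')
    rw [mul_inv]
    linarith
  have hdist : dist y x ≤ 2 * ‖x‖ ^ 2 * R := by
    have := dist_inversion_zero_one hy hx
    rw [eq_div_iff (by positivity)] at this
    rw [← this]
    have hR0 : 0 ≤ R := dist_nonneg.trans hd'
    calc dist (inversion 0 1 y) (inversion 0 1 x) * (‖y‖ * ‖x‖) ≤ R * (2 * ‖x‖ * ‖x‖) := by
          gcongr
      _ = 2 * ‖x‖ ^ 2 * R := by ring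
  exact ⟨y, ⟨⟨mem_closedBall.2 hdist, hyF⟩, hy_lo⟩, rfl⟩

namespace AssouadBound

lemma coverN_inversion_image_le (h : AssouadBound F α C) {z : E} (hz : z ∈ F) {m ρ : ℝ}
    (hm : 0 < m) (hr : 0 < r) (hmr : m ^ 2 * r ≤ ρ) :
    coverN (inversion 0 1 '' (closedBall z ρ ∩ F ∩ {y | m ≤ ‖y‖})) r ≤
      ENNReal.ofReal (C * (ρ / (m ^ 2 * r)) ^ α) := by
  have hr' : r = (m ^ 2)⁻¹.toNNReal * (m ^ 2 * r) := by
    rw [Real.coe_toNNReal _ (by positivity)]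
    field_simp
  calc coverN (inversion 0 1 '' (closedBall z ρ ∩ F ∩ {y | m ≤ ‖y‖})) r
      = coverN (inversion 0 1 '' (closedBall z ρ ∩ F ∩ {y | m ≤ ‖y‖}))
          ((m ^ 2)⁻¹.toNNReal * (m ^ 2 * r)) := by rw [← hr']
    _ ≤ coverN (closedBall z ρ ∩ F ∩ {y | m ≤ ‖y‖}) (m ^ 2 * r) :=
        coverN_image_le ((lipschitzOnWith_inversion_zero_one hm).mono inter_subset_right)
          (by positivity)
    _ ≤ coverN (closedBall z ρ ∩ F) (m ^ 2 * r) := coverN_mono inter_subset_left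
    _ ≤ ENNReal.ofReal (C * (ρ / (m ^ 2 * r)) ^ α) := h z hz _ _ (by positivity) hmr

lemma coverN_closedBall_inversion_inter_image_le (h : AssouadBound F α C) (hF : 0 ∉ F)
    (hx : x ∈ F) (hr : 0 < r) (hrR : r ≤ R) (hR : R ≤ ‖x‖⁻¹ / 2) :
    coverN (closedBall (inversion 0 1 x) R ∩ inversion 0 1 '' F) r ≤
      ENNReal.ofReal (C * (9 / 2 * (R / r)) ^ α) := by
  have hx0 : x ≠ 0 := ne_of_mem_of_not_mem hx hF
  have ht : 0 < ‖x‖ := norm_pos_iff.2 hx0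
  calc _ ≤ _ := coverN_mono (closedBall_inversion_inter_image_subset hF hx0 hR)
    _ ≤ _ := h.coverN_inversion_image_le hx (by positivity) hr (by nlinarith)
    _ = ENNReal.ofReal (C * (9 / 2 * (R / r)) ^ α) := by
        congr 3
        field_simp
        ring

lemma coverN_inversion_image_inter_annulus_le (h : AssouadBound F α C) (hF : 0 ∉ F) {a : ℝ}
    (ha : 0 < a) (hr : 0 < r) (hra : r ≤ 4 * a) :
    coverN (inversion 0 1 '' F ∩ {y | ‖y‖ ∈ Ioc (a / 2) a}) r ≤
      ENNReal.ofReal (C * (4 * a / r) ^ α) := by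
  rcases eq_empty_or_nonempty (inversion 0 1 '' F ∩ {y | ‖y‖ ∈ Ioc (a / 2) a}) with
    hempty | ⟨_, ⟨z, hz, rfl⟩, hz_lo, -⟩
  · rw [hempty, coverN_empty]
    exact zero_le
  have hnorm_le : ∀ y, a / 2 < ‖inversion (0 : E) 1 y‖ → ‖y‖ ≤ 2 / a := fun y hy => by
    simpa using norm_le_of_le_norm_inversion (by positivity) hy.le
  have hsub : inversion 0 1 '' F ∩ {y | ‖y‖ ∈ Ioc (a / 2) a} ⊆
      inversion 0 1 '' (closedBall z (4 / a) ∩ F ∩ {y | a⁻¹ ≤ ‖y‖}) := by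
    rintro _ ⟨⟨y, hy, rfl⟩, hy_lo, hy_hi⟩
    have hdist : dist y z ≤ 4 / a := by
      have := hnorm_le y hy_lo
      have := hnorm_le z hz_lo
      have : 2 / a + 2 / a = 4 / a := by ring
      linarith [dist_le_norm_add_norm y z]
    exact ⟨y, ⟨⟨mem_closedBall.2 hdist, hy⟩,
      le_norm_of_norm_inversion_le (ne_of_mem_of_not_mem hy hF) hy_hi⟩, rfl⟩
  calc _ ≤ _ := coverN_mono hsub
    _ ≤ _ := h.coverN_inversion_image_le hz (inv_pos.2 ha) hr <| calc
        a⁻¹ ^ 2 * r ≤ a⁻¹ ^ 2 * (4 * a) := by gcongr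
        _ = 4 / a := by field_simp
    _ = ENNReal.ofReal (C * (4 * a / r) ^ α) := by
        congr 3
        field_simp

lemma coverN_closedBall_zero_inter_inversion_image_le (h : AssouadBound F α C) (hC : 0 ≤ C)
    (hα : 0 < α) (hF : 0 ∉ F) {ρ : ℝ} (hr : 0 < r) (hrρ : r ≤ ρ) :
    coverN (closedBall 0 ρ ∩ inversion 0 1 '' F) r ≤
      ENNReal.ofReal (C * (4 * ρ / r) ^ α / (1 - 2⁻¹ ^ α)) + 1 := by
  have hρ : 0 < ρ := hr.trans_le hrρ
  -- `ρ / r < 2 ^ (n + 1)` makes the central ball small enough, and `2 ^ (n + 1) ≤ 2 * ρ / r`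
  -- keeps the outer radius `ρ / 2 ^ k` of every annulus above `r / 4`.
  obtain ⟨n, hn_le, hn_lt⟩ := exists_nat_pow_near ((one_le_div hr).2 hrρ) one_lt_two
  set annulus : ℕ → Set E := fun k =>
    inversion 0 1 '' F ∩ {y | ‖y‖ ∈ Ioc (ρ / 2 ^ k / 2) (ρ / 2 ^ k)}
  have hcover : closedBall 0 ρ ∩ inversion 0 1 '' F ⊆
      (⋃ k ∈ Finset.range (n + 2), annulus k) ∪ closedBall 0 (ρ / 2 ^ (n + 2)) := by
    rintro y ⟨hy, hyF⟩
    by_cases hys : ‖y‖ ≤ ρ / 2 ^ (n + 2)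
    · exact Or.inr (mem_closedBall_zero_iff.2 hys)
    obtain ⟨k, hk, hyk⟩ := mem_iUnion₂.1
      (Ioc_div_two_pow_subset_biUnion ρ (n + 1) ⟨not_le.1 hys, mem_closedBall_zero_iff.1 hy⟩)
    exact Or.inl (mem_biUnion hk ⟨hyF, hyk⟩)
  have hcenter : coverN (closedBall (0 : E) (ρ / 2 ^ (n + 2))) r ≤ 1 := by
    refine coverN_le_one (ediam_le_of_forall_dist_le fun a ha b hb => ?_)
    have h2 : ρ / 2 ^ (n + 2) + ρ / 2 ^ (n + 2) ≤ r := by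
      rw [← add_div, div_le_iff₀ (by positivity), pow_succ]
      rw [div_lt_iff₀ hr] at hn_lt
      nlinarith
    linarith [dist_le_norm_add_norm a b, mem_closedBall_zero_iff.1 ha,
      mem_closedBall_zero_iff.1 hb]
  have hannulus : ∀ k ∈ Finset.range (n + 2),
      coverN (annulus k) r ≤ ENNReal.ofReal (C * (4 * ρ / r / 2 ^ k) ^ α) := fun k hk => by
    have hk2 : (2 : ℝ) ^ k ≤ 2 * 2 ^ n := by
      rw [← pow_succ']
      exact pow_le_pow_right₀ one_le_two (Nat.lt_succ_iff.1 (Finset.mem_range.1 hk))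
    rw [le_div_iff₀ hr] at hn_le
    convert h.coverN_inversion_image_inter_annulus_le hF (a := ρ / 2 ^ k) (by positivity) hr
      (by rw [mul_div_assoc', le_div_iff₀ (by positivity)]; nlinarith) using 4
    ring
  calc coverN (closedBall 0 ρ ∩ inversion 0 1 '' F) r
      ≤ coverN (⋃ k ∈ Finset.range (n + 2), annulus k) r +
          coverN (closedBall (0 : E) (ρ / 2 ^ (n + 2))) r :=
        (coverN_mono hcover).trans coverN_union_le
    _ ≤ ∑ k ∈ Finset.range (n + 2), ENNReal.ofReal (C * (4 * ρ / r / 2 ^ k) ^ α) + 1 :=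
        add_le_add ((coverN_biUnion_le _ _).trans (Finset.sum_le_sum hannulus)) hcenter
    _ ≤ ENNReal.ofReal (C * (4 * ρ / r) ^ α / (1 - 2⁻¹ ^ α)) + 1 := by
        rw [← ENNReal.ofReal_sum_of_nonneg fun k _ => by positivity, ← Finset.mul_sum,
          mul_div_assoc C]
        gcongr
        exact sum_rpow_div_two_pow_le hα (by positivity) _

lemma inversion_image (h : AssouadBound F α C) (hC : 0 ≤ C) (hα : 0 < α) (hF : 0 ∉ F) :
    AssouadBound (inversion 0 1 '' F) α (C * 12 ^ α / (1 - 2⁻¹ ^ α) + 1) := by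
  rintro _ ⟨x, hx, rfl⟩ r R hr hrR
  have hR0 : 0 < R := hr.trans_le hrR
  have hq : 1 ≤ (R / r) ^ α := Real.one_le_rpow ((one_le_div hr).2 hrR) hα.le
  have hs : 0 < 1 - (2⁻¹ : ℝ) ^ α := sub_pos.2 (Real.rpow_lt_one (by norm_num) (by norm_num) hα)
  have hD : C * 12 ^ α ≤ C * 12 ^ α / (1 - 2⁻¹ ^ α) :=
    le_div_self (by positivity) hs (by linarith [Real.rpow_nonneg (inv_nonneg.2 zero_le_two) α])
  rcases le_or_gt R (‖x‖⁻¹ / 2) with hR | hR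
  · refine (h.coverN_closedBall_inversion_inter_image_le hF hx hr hrR hR).trans
      (ENNReal.ofReal_le_ofReal ?_)
    have h9 : (9 / 2 : ℝ) ^ α ≤ 12 ^ α := Real.rpow_le_rpow (by norm_num) (by norm_num) hα.le
    rw [Real.mul_rpow (by norm_num) (by positivity), ← mul_assoc]
    gcongr
    linarith [mul_le_mul_of_nonneg_left h9 hC]
  · have hball : closedBall (inversion 0 1 x) R ⊆ closedBall 0 (3 * R) := by
      refine closedBall_subset_closedBall' ?_
      rw [dist_zero_right, norm_inversion_zero_one]
      linarith
    calc coverN (closedBall (inversion 0 1 x) R ∩ inversion 0 1 '' F) r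
        ≤ coverN (closedBall 0 (3 * R) ∩ inversion 0 1 '' F) r :=
          coverN_mono (inter_subset_inter_left _ hball)
      _ ≤ ENNReal.ofReal (C * (4 * (3 * R) / r) ^ α / (1 - 2⁻¹ ^ α)) + ENNReal.ofReal 1 := by
          rw [ENNReal.ofReal_one]
          exact h.coverN_closedBall_zero_inter_inversion_image_le hC hα hF hr (by linarith)
      _ ≤ ENNReal.ofReal (C * 12 ^ α / (1 - 2⁻¹ ^ α) * (R / r) ^ α) +
            ENNReal.ofReal ((R / r) ^ α) := by
          rw [show C * (4 * (3 * R) / r) ^ α / (1 - 2⁻¹ ^ α) =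
              C * 12 ^ α / (1 - 2⁻¹ ^ α) * (R / r) ^ α by
            rw [show 4 * (3 * R) / r = 12 * (R / r) by ring,
              Real.mul_rpow (by norm_num) (by positivity)]
            ring]
          gcongr
      _ = ENNReal.ofReal ((C * 12 ^ α / (1 - 2⁻¹ ^ α) + 1) * (R / r) ^ α) := by
          rw [← ENNReal.ofReal_add (by positivity) (by positivity), add_one_mul]

end AssouadBound

lemma assouadExponents_subset_inversion_image (hF : 0 ∉ F) :
    assouadExponents F ⊆ assouadExponents (inversion 0 1 '' F) :=
  fun α ⟨hα, C, hC, h⟩ => ⟨hα, _, add_pos_of_nonneg_of_pos (div_nonneg (by positivity)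
    (sub_nonneg.2 (Real.rpow_le_one (by norm_num) (by norm_num) hα.le))) one_pos,
    h.inversion_image hC.le hα hF⟩

lemma dimA_inversion_image (hF : 0 ∉ F) : dimA (inversion 0 1 '' F) = dimA F := by
  have hF' : (0 : E) ∉ inversion 0 1 '' F := fun ⟨x, hx, hx0⟩ =>
    hF ((inversion_eq_center one_ne_zero).1 hx0 ▸ hx)
  rw [dimA_eq_sInf_assouadExponents, dimA_eq_sInf_assouadExponents]
  refine congrArg sInf (Subset.antisymm ?_ (assouadExponents_subset_inversion_image hF))
  simpa only [image_inversion_zero_one_image] using assouadExponents_subset_inversion_image hF'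

end InversionAssouad

theorem stmt19_general {n : ℕ} (F : Set (EuclideanSpace ℝ (Fin n)))
    (hF : ∀ x ∈ F, x ≠ 0) :
    dimA ((fun x : EuclideanSpace ℝ (Fin n) => (‖x‖ ^ 2)⁻¹ • x) '' F) = dimA F := by
  rw [← inversion_zero_one_eq]
  exact dimA_inversion_image fun h0 => hF 0 h0 rfl

/-- invariance of Assouad dimension under the inversion `x ↦ x/|x|²`. -/
theorem stmt19 {n : ℕ} (hn : 1 ≤ n) (F : Set (EuclideanSpace ℝ (Fin n)))
    (hF : ∀ x ∈ F, x ≠ 0) :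
    dimA ((fun x : EuclideanSpace ℝ (Fin n) => (‖x‖ ^ 2)⁻¹ • x) '' F) = dimA F :=
  stmt19_general F hF
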